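/- For every n ≥ 1 and all α, β, α', β', j_1, ..., j_n, i_1, ..., i_n ∈ I, one has [N_{αβ}, (Y_{α', j_1, ..., j_n})† Y_{β', i_1, ..., i_n}] = Σ_{l=1}^{n} δ_{β, j_l} (Y_{α', j_1, ..., α, ..., j_n})† Y_{β', i_1, ..., i_n} + δ_{β, α'} (Y_{α, j_1, ..., j_n})† Y_{β', i_1, ..., i_n} − Σ_{l=1}^{n} δ_{α, i_l} (Y_{α', j_1, ..., j_n})† Y_{β', i_1, ..., β, ..., i_n} − δ_{α, β'} (Y_{α', j_1, ..., j_n})† Y_{β, i_1, ..., i_n}, where in the replacement sums the index j_l (respectively i_l) is replaced by α (respectively β). -/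

import Mathlib

/-- The Y-operators `Y_{k, i₁, …, iₙ}`, defined recursively by
`Y_{k,i} = b_k b_i − q b_i b_k` and
`Y_{k, i₁, …, i_{n+1}} = Y_{k, i₁, …, iₙ} b_{i_{n+1}} − q^{n+1} b_{i_{n+1}} Y_{k, i₁, …, iₙ}`.
The index tuple `(i₁, …, iₙ)` is stored as the list `[iₙ, …, i₁]` (latest index first). -/
def Yop {A : Type*} [Ring A] [Algebra ℝ A] {I : Type*}
    (q : ℝ) (b : I → A) (k : I) : List I → A
  | [] => 0
  | [i] => b k * b i - q • (b i * b k)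
  | i :: j :: L =>
      Yop q b k (j :: L) * b i - q ^ (L.length + 2) • (b i * Yop q b k (j :: L))

/-- The adjoint Y-operators `(Y_{k, i₁, …, iₙ})†`, defined recursively by
`(Y_{k,i})† = b†_i b†_k − q b†_k b†_i` and
`(Y_{k, i₁, …, i_{n+1}})† = b†_{i_{n+1}} (Y_{k, i₁, …, iₙ})† − q^{n+1} (Y_{k, i₁, …, iₙ})† b†_{i_{n+1}}`.
The index tuple `(i₁, …, iₙ)` is stored as the list `[iₙ, …, i₁]` (latest index first). -/
def Ydag {A : Type*} [Ring A] [Algebra ℝ A] {I : Type*}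
    (q : ℝ) (bd : I → A) (k : I) : List I → A
  | [] => 0
  | [i] => bd i * bd k - q • (bd k * bd i)
  | i :: j :: L =>
      bd i * Ydag q bd k (j :: L) - q ^ (L.length + 2) • (Ydag q bd k (j :: L) * bd i)

set_option linter.unusedSectionVars false

section aux
variable {A : Type*} [Ring A] [Algebra ℝ A] {I : Type*} [DecidableEq I]

lemma comm_mul' (n x y : A) : n*(x*y) - (x*y)*n = (n*x - x*n)*y + x*(n*y - y*n) := by
  noncomm_ring

lemma comm_smul' (c : ℝ) (n x : A) : n*(c•x) - (c•x)*n = c•(n*x - x*n) := by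
  rw [mul_smul_comm, smul_mul_assoc, smul_sub]

lemma comm_sub' (n x y : A) : n*(x-y) - (x-y)*n = (n*x - x*n) - (n*y - y*n) := by
  noncomm_ring

lemma Ydag_cons (q : ℝ) (bd : I → A) (k i : I) (M : List I) (hM : M ≠ []) :
    Ydag q bd k (i :: M) = bd i * Ydag q bd k M
      - q ^ (M.length + 1) • (Ydag q bd k M * bd i) := by
  cases M with
  | nil => simp at hM
  | cons j L => rfl

lemma Yop_cons (q : ℝ) (b : I → A) (k i : I) (M : List I) (hM : M ≠ []) :
    Yop q b k (i :: M) = Yop q b k M * b i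
      - q ^ (M.length + 1) • (b i * Yop q b k M) := by
  cases M with
  | nil => simp at hM
  | cons j L => rfl

lemma comm_Ydag (q : ℝ) (bd : I → A) (N : I → I → A)
    (hNbd : ∀ α β μ : I, N α β * bd μ - bd μ * N α β = if β = μ then bd α else 0)
    (α β k : I) : ∀ (M : List I), M ≠ [] →
    N α β * Ydag q bd k M - Ydag q bd k M * N α β =
      (∑ l : Fin M.length, if β = M.get l then Ydag q bd k (M.set l α) else 0)
        + (if β = k then Ydag q bd α M else 0) := by
  intro M
  induction M with
  | nil => simp
  | cons i M ih =>
    intro _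
    cases M with
    | nil =>
      show N α β * (bd i * bd k - q • (bd k * bd i))
          - (bd i * bd k - q • (bd k * bd i)) * N α β = _
      rw [comm_sub', comm_mul', comm_smul', comm_mul', hNbd α β i, hNbd α β k]
      have hone : (∑ l : Fin ([i] : List I).length,
          if β = [i].get l then Ydag q bd k ([i].set l α) else 0)
          = (if β = i then Ydag q bd k [α] else 0) := by
        show (∑ l : Fin 1, if β = [i].get l then Ydag q bd k ([i].set l α) else 0) = _
        rw [Fin.sum_univ_one]
        rfl
      rw [hone]
      split_ifs with h1 h2 h2 <;>
        simp only [Ydag, zero_mul, mul_zero, smul_add, smul_sub,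
          add_zero, zero_add, smul_zero, sub_zero] <;> module
    | cons j L =>
      set M' := j :: L with hM'
      have hne : M' ≠ [] := by simp [hM']
      set c : ℝ := q ^ (M'.length + 1) with hc
      set Y' := Ydag q bd k M' with hY'
      set S := ∑ l : Fin M'.length, if β = M'.get l then Ydag q bd k (M'.set l α) else 0
        with hS
      set T := if β = k then Ydag q bd α M' else 0 with hT
      set e : A := if β = i then bd α else 0 with he
      have hD : N α β * Y' - Y' * N α β = S + T := ih hne
      rw [Ydag_cons q bd k i M' hne, comm_sub', comm_mul', comm_smul', comm_mul',
        hNbd α β i, hD, ← he]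
      have hsum : (∑ l : Fin (i :: M').length,
          if β = (i :: M').get l then Ydag q bd k ((i :: M').set l α) else 0)
          = (if β = i then Ydag q bd k (α :: M') else 0)
            + (bd i * S - c • (S * bd i)) := by
        show (∑ l : Fin (M'.length + 1),
          if β = (i :: M').get l then Ydag q bd k ((i :: M').set l α) else 0) = _
        rw [Fin.sum_univ_succ]
        congr 1
        rw [hS, Finset.mul_sum, Finset.sum_mul, Finset.smul_sum, ← Finset.sum_sub_distrib]
        apply Finset.sum_congr rfl
        intro l _
        have hget : (i :: M').get l.succ = M'.get l := rfl
        have hset : (i :: M').set (l.succ : Fin _) α = i :: M'.set l α := rfl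
        rw [hget, hset, mul_ite, mul_zero, ite_mul, zero_mul, smul_ite, smul_zero]
        split_ifs with h
        · have hlen : (M'.set (↑l) α).length = M'.length := by simp
          have hnil : M'.set (↑l) α ≠ [] :=
            List.ne_nil_of_length_pos (by simp [hM'])
          rw [Ydag_cons q bd k i _ hnil, hlen]
        · simp
      rw [hsum]
      have hT' : (if β = k then Ydag q bd α (i :: M') else 0)
          = bd i * T - c • (T * bd i) := by
        by_cases h : β = k <;> simp [h, hT, Ydag_cons q bd α i M' hne] <;> rfl
      rw [hT']
      have hE : (if β = i then Ydag q bd k (α :: M') else 0)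
          = e * Y' - c • (Y' * e) := by
        by_cases h : β = i <;> simp [h, he, Ydag_cons q bd k α M' hne] <;> rfl
      rw [hE]
      simp only [mul_add, add_mul, smul_add]
      abel


lemma comm_Yop (q : ℝ) (b : I → A) (N : I → I → A)
    (hNb : ∀ α β μ : I, N α β * b μ - b μ * N α β = -(if α = μ then b β else 0))
    (α β k : I) : ∀ (M : List I), M ≠ [] →
    N α β * Yop q b k M - Yop q b k M * N α β =
      -(∑ l : Fin M.length, if α = M.get l then Yop q b k (M.set l β) else 0)
        - (if α = k then Yop q b β M else 0) := by
  intro M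
  induction M with
  | nil => simp
  | cons i M ih =>
    intro _
    cases M with
    | nil =>
      show N α β * (b k * b i - q • (b i * b k))
          - (b k * b i - q • (b i * b k)) * N α β = _
      rw [comm_sub', comm_mul', comm_smul', comm_mul', hNb α β i, hNb α β k]
      have hone : (∑ l : Fin ([i] : List I).length,
          if α = [i].get l then Yop q b k ([i].set l β) else 0)
          = (if α = i then Yop q b k [β] else 0) := by
        show (∑ l : Fin 1, if α = [i].get l then Yop q b k ([i].set l β) else 0) = _
        rw [Fin.sum_univ_one]
        rfl
      rw [hone]
      split_ifs with h1 h2 h2 <;>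
        simp only [Yop, zero_mul, mul_zero, smul_add, smul_sub, neg_zero, mul_neg,
          neg_mul, smul_neg, add_zero, zero_add, smul_zero, sub_zero, neg_sub] <;> module
    | cons j L =>
      set M' := j :: L with hM'
      have hne : M' ≠ [] := by simp [hM']
      set c : ℝ := q ^ (M'.length + 1) with hc
      set Y' := Yop q b k M' with hY'
      set S := ∑ l : Fin M'.length, if α = M'.get l then Yop q b k (M'.set l β) else 0
        with hS
      set T := if α = k then Yop q b β M' else 0 with hT
      set e : A := -(if α = i then b β else 0) with he
      have hD : N α β * Y' - Y' * N α β = -S - T := ih hne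
      rw [Yop_cons q b k i M' hne, comm_sub', comm_mul', comm_smul', comm_mul',
        hNb α β i, hD, ← he]
      have hsum : (∑ l : Fin (i :: M').length,
          if α = (i :: M').get l then Yop q b k ((i :: M').set l β) else 0)
          = (if α = i then Yop q b k (β :: M') else 0)
            + (S * b i - c • (b i * S)) := by
        show (∑ l : Fin (M'.length + 1),
          if α = (i :: M').get l then Yop q b k ((i :: M').set l β) else 0) = _
        rw [Fin.sum_univ_succ]
        congr 1
        rw [hS, Finset.sum_mul, Finset.mul_sum, Finset.smul_sum, ← Finset.sum_sub_distrib]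
        apply Finset.sum_congr rfl
        intro l _
        have hget : (i :: M').get l.succ = M'.get l := rfl
        have hset : (i :: M').set (↑l.succ) β = i :: M'.set (↑l) β := rfl
        rw [hget, hset, mul_ite, mul_zero, ite_mul, zero_mul, smul_ite, smul_zero]
        split_ifs with h
        · have hlen : (M'.set (↑l) β).length = M'.length := by simp
          have hnil : M'.set (↑l) β ≠ [] :=
            List.ne_nil_of_length_pos (by simp [hM'])
          rw [Yop_cons q b k i _ hnil, hlen]
        · simp
      rw [hsum]
      have hT' : (if α = k then Yop q b β (i :: M') else 0)
          = T * b i - c • (b i * T) := by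
        by_cases h : α = k <;> simp [h, hT, Yop_cons q b β i M' hne] <;> rfl
      rw [hT']
      have hE : (if α = i then Yop q b k (β :: M') else 0)
          = -(Y' * e - c • (e * Y')) := by
        by_cases h : α = i <;>
          simp only [h, if_true, if_false, he, neg_neg, neg_zero, mul_zero, zero_mul,
            smul_zero, sub_zero, mul_neg, neg_mul, Yop_cons q b k β M' hne, eq_self_iff_true,
            not_false_iff, sub_self] <;>
          first
          | rfl
          | (rw [← hY', ← hc]; module)
          | simp
      rw [hE]
      simp only [mul_add, add_mul, smul_add, mul_sub, sub_mul, smul_sub, mul_neg, neg_mul,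
        smul_neg, neg_add, neg_sub, neg_neg]
      abel

end aux


/-- For every n ≥ 1 and all α, β, α', β', j₁, …, jₙ, i₁, …, iₙ ∈ I,
`[N_{αβ}, (Y_{α', j₁, …, jₙ})† Y_{β', i₁, …, iₙ}]
  = Σ_l δ_{β, j_l} (Y_{α', j₁, …, α, …, jₙ})† Y_{β', i₁, …, iₙ}
    + δ_{β, α'} (Y_{α, j₁, …, jₙ})† Y_{β', i₁, …, iₙ}
    − Σ_l δ_{α, i_l} (Y_{α', j₁, …, jₙ})† Y_{β', i₁, …, β, …, iₙ}
    − δ_{α, β'} (Y_{α', j₁, …, jₙ})† Y_{β, i₁, …, iₙ}`. -/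
theorem quon_comm_N_YdagY
    {A : Type*} [Ring A] [Algebra ℝ A] {I : Type*} [DecidableEq I]
    (q : ℝ) (b bd : I → A) (N : I → I → A)
    (hNbd : ∀ α β μ : I, N α β * bd μ - bd μ * N α β = if β = μ then bd α else 0)
    (hNb : ∀ α β μ : I, N α β * b μ - b μ * N α β = -(if α = μ then b β else 0))
    (α β α' β' : I) (Lj Li : List I) (hn : Lj.length = Li.length) (hL : Lj ≠ []) :
    N α β * (Ydag q bd α' Lj * Yop q b β' Li)
        - (Ydag q bd α' Lj * Yop q b β' Li) * N α β =
      (∑ l : Fin Lj.length,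
          if β = Lj.get l then Ydag q bd α' (Lj.set l α) * Yop q b β' Li else 0)
        + (if β = α' then Ydag q bd α Lj * Yop q b β' Li else 0)
        - (∑ l : Fin Li.length,
            if α = Li.get l then Ydag q bd α' Lj * Yop q b β' (Li.set l β) else 0)
        - (if α = β' then Ydag q bd α' Lj * Yop q b β Li else 0) := by
  have hli : Li ≠ [] := by
    intro h
    subst h
    exact hL (List.eq_nil_of_length_eq_zero hn)
  rw [comm_mul', comm_Ydag q bd N hNbd α β α' Lj hL, comm_Yop q b N hNb α β β' Li hli]
  rw [add_mul, Finset.sum_mul, mul_sub, mul_neg, Finset.mul_sum]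
  simp only [ite_mul, zero_mul, mul_ite, mul_zero]
  abel
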